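/- Fix p ∈ (0,1). If X_n ∼ Bin(n, p) and k_n is a sequence of integers with k_n = np + o(√n) (i.e., |k_n − np|/√n → 0), then P(X_n = k_n) · √(2πnp(1−p)) → 1 as n → ∞. -/

import Mathlib

/-!
With `M = n - K`, Stirling's formula rewrites `C(n, K) p^K (1-p)^M √(2πnp(1-p))` exactly as
the product of a ratio of Stirling sequences, `√(n² p (1-p) / (K M))`, and
`exp (K log (np/K) + M log (n(1-p)/M))`. The first two factors tend to `1` because `K` and `M`
are asymptotic to `np` and `n(1-p)`. The exponent is a two-point relative entropy: from
`1 - 1/x ≤ log x ≤ x - 1` it lies between `-(K - np)² / (np(1-p))` and `0`, and the lower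
bound tends to `0` exactly because `K - np = o(√n)`.
-/

open Filter

/-- The probability that a `Bin(n,p)` random variable equals the integer `k`. -/
noncomputable def binomProb (n : ℕ) (p : ℝ) (k : ℤ) : ℝ :=
  if 0 ≤ k ∧ k ≤ (n : ℤ) then
    (n.choose k.toNat : ℝ) * p ^ k.toNat * (1 - p) ^ (n - k.toNat)
  else 0

open Real Topology Stirling

lemma mul_log_div_le_sub {a c : ℝ} (ha : 0 < a) (hc : 0 < c) : a * log (c / a) ≤ c - a :=
  calc a * log (c / a) ≤ a * (c / a - 1) :=
        mul_le_mul_of_nonneg_left (log_le_sub_one_of_pos (div_pos hc ha)) ha.le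
    _ = c - a := by field_simp

lemma sub_sub_sq_div_le_mul_log_div {a c : ℝ} (ha : 0 < a) (hc : 0 < c) :
    c - a - (a - c) ^ 2 / c ≤ a * log (c / a) :=
  calc c - a - (a - c) ^ 2 / c = a * (1 - (c / a)⁻¹) := by field_simp; ring
    _ ≤ a * log (c / a) :=
        mul_le_mul_of_nonneg_left (one_sub_inv_le_log_of_pos (div_pos hc ha)) ha.le

lemma mul_log_div_add_mul_log_div_nonpos {a b c d : ℝ}
    (ha : 0 < a) (hb : 0 < b) (hc : 0 < c) (hd : 0 < d) (h : a + b = c + d) :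
    a * log (c / a) + b * log (d / b) ≤ 0 := by
  linarith [mul_log_div_le_sub ha hc, mul_log_div_le_sub hb hd]

lemma neg_sq_div_add_sq_div_le_mul_log_div_add_mul_log_div {a b c d : ℝ}
    (ha : 0 < a) (hb : 0 < b) (hc : 0 < c) (hd : 0 < d) (h : a + b = c + d) :
    -((a - c) ^ 2 / c + (b - d) ^ 2 / d) ≤ a * log (c / a) + b * log (d / b) := by
  linarith [sub_sub_sq_div_le_mul_log_div ha hc, sub_sub_sq_div_le_mul_log_div hb hd]

lemma choose_mul_pow_mul_pow_mul_sqrt_eq {n K M : ℕ} (hn : K + M = n) (hK : K ≠ 0)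
    (hM : M ≠ 0) {p q : ℝ} (hp : 0 ≤ p) (hq : 0 ≤ q) :
    (n.choose K : ℝ) * p ^ K * q ^ M * √(2 * π * n * p * q) =
      √π * stirlingSeq n / (stirlingSeq K * stirlingSeq M) * √(n ^ 2 * p * q / (K * M)) *
        ((n * p / K) ^ K * (n * q / M) ^ M) := by
  have factorial_eq (m : ℕ) (hm : m ≠ 0) :
      (m.factorial : ℝ) = stirlingSeq m * √(2 * m) * (m / exp 1) ^ m := by
    rw [stirlingSeq]; field_simp
  have hsqrt : √(2 * π * n * p * q) =
      √π * √(n ^ 2 * p * q / (K * M)) * (√(2 * K) * √(2 * M)) / √(2 * n) := by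
    rw [← sqrt_mul (by positivity), ← sqrt_mul (by positivity), ← sqrt_mul (by positivity),
      ← sqrt_div (by positivity)]
    congr 1
    field_simp
  subst hn
  rw [Nat.cast_choose ℝ (Nat.le_add_right K M), Nat.add_sub_cancel_left,
    factorial_eq _ hK, factorial_eq _ hM, factorial_eq _ (by omega), hsqrt]
  push_cast
  simp only [div_pow, mul_pow, pow_add]
  field_simp

lemma tendsto_sqrt_pi_mul_stirlingSeq_div {ι : Type*} {l : Filter ι} {N K M : ι → ℕ}
    (hN : Tendsto N l atTop) (hK : Tendsto K l atTop) (hM : Tendsto M l atTop) :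
    Tendsto (fun i ↦ √π * stirlingSeq (N i) / (stirlingSeq (K i) * stirlingSeq (M i)))
      l (𝓝 1) := by
  have h := ((tendsto_stirlingSeq_sqrt_pi.comp hN).const_mul √π).div
    ((tendsto_stirlingSeq_sqrt_pi.comp hK).mul (tendsto_stirlingSeq_sqrt_pi.comp hM))
    (by positivity)
  rwa [div_self (by positivity)] at h

section Sequences

variable {x : ℕ → ℝ} {p : ℝ}

lemma tendsto_div_self_of_tendsto_abs_sub_div_sqrt
    (h : Tendsto (fun n : ℕ ↦ |x n - n * p| / √n) atTop (𝓝 0)) :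
    Tendsto (fun n : ℕ ↦ x n / n) atTop (𝓝 p) := by
  have hinv : Tendsto (fun n : ℕ ↦ (√n)⁻¹) atTop (𝓝 0) :=
    tendsto_inv_atTop_zero.comp (tendsto_sqrt_atTop.comp tendsto_natCast_atTop_atTop)
  rw [tendsto_iff_norm_sub_tendsto_zero]
  have h' := h.mul hinv
  rw [zero_mul] at h'
  refine h'.congr' ?_
  filter_upwards [eventually_gt_atTop 0] with n hn
  have hn : (0 : ℝ) < n := by exact_mod_cast hn
  have : x n / n - p = (x n - n * p) / √n * (√n)⁻¹ := by
    rw [← div_eq_mul_inv, div_div, mul_self_sqrt hn.le]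
    field_simp
  rw [this, norm_mul, norm_div, norm_inv, norm_eq_abs, norm_of_nonneg (sqrt_nonneg _)]

lemma tendsto_sq_sub_div_of_tendsto_abs_sub_div_sqrt
    (h : Tendsto (fun n : ℕ ↦ |x n - n * p| / √n) atTop (𝓝 0)) :
    Tendsto (fun n : ℕ ↦ (x n - n * p) ^ 2 / n) atTop (𝓝 0) := by
  have h' := h.pow 2
  rw [zero_pow two_ne_zero] at h'
  refine h'.congr fun n ↦ ?_
  rw [div_pow, sq_abs, sq_sqrt n.cast_nonneg]

lemma tendsto_atTop_of_tendsto_div_self (h : Tendsto (fun n : ℕ ↦ x n / n) atTop (𝓝 p))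
    (hp : 0 < p) : Tendsto x atTop atTop := by
  refine (tendsto_natCast_atTop_atTop.atTop_mul_pos hp h).congr' ?_
  filter_upwards [eventually_gt_atTop 0] with n hn
  field_simp

lemma eventually_pos_and_lt_of_tendsto_div_self
    (h : Tendsto (fun n : ℕ ↦ x n / n) atTop (𝓝 p))
    (hp0 : 0 < p) (hp1 : p < 1) : ∀ᶠ n : ℕ in atTop, 0 < x n ∧ x n < n := by
  filter_upwards [h (Ioo_mem_nhds hp0 hp1), eventually_gt_atTop 0] with n hx hn
  have hn : (0 : ℝ) < n := by exact_mod_cast hn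
  exact ⟨(div_pos_iff_of_pos_right hn).1 hx.1, (div_lt_one hn).1 hx.2⟩

lemma tendsto_sqrt_sq_mul_div_mul {x y : ℕ → ℝ} {p q : ℝ}
    (hx : Tendsto (fun n : ℕ ↦ x n / n) atTop (𝓝 p))
    (hy : Tendsto (fun n : ℕ ↦ y n / n) atTop (𝓝 q)) (hpq : p * q ≠ 0) :
    Tendsto (fun n : ℕ ↦ √(n ^ 2 * p * q / (x n * y n))) atTop (𝓝 1) := by
  have h := ((tendsto_const_nhds (x := p * q)).div (hx.mul hy) hpq).sqrt
  rw [div_self hpq, sqrt_one] at h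
  refine h.congr' ?_
  filter_upwards [eventually_gt_atTop 0] with n hn
  rw [Pi.div_apply]
  congr 1
  field_simp

end Sequences

lemma tendsto_mul_log_add_mul_log {a b : ℕ → ℝ} {p : ℝ} (hp0 : 0 < p) (hp1 : p < 1)
    (hab : ∀ᶠ n : ℕ in atTop, 0 < a n ∧ 0 < b n ∧ a n + b n = n)
    (hsq : Tendsto (fun n : ℕ ↦ (a n - n * p) ^ 2 / n) atTop (𝓝 0)) :
    Tendsto (fun n : ℕ ↦ a n * log (n * p / a n) + b n * log (n * (1 - p) / b n))
      atTop (𝓝 0) := by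
  have hlower := (hsq.mul_const (1 / p + 1 / (1 - p))).neg
  rw [zero_mul, neg_zero] at hlower
  refine tendsto_of_tendsto_of_tendsto_of_le_of_le' hlower tendsto_const_nhds ?_ ?_
  · filter_upwards [hab] with n ⟨ha, hb, hn⟩
    have hn0 : (0 : ℝ) < n := by linarith
    have hq : 0 < 1 - p := by linarith
    have key := neg_sq_div_add_sq_div_le_mul_log_div_add_mul_log_div ha hb
      (mul_pos hn0 hp0) (mul_pos hn0 hq) (by linarith)
    rw [show b n - n * (1 - p) = -(a n - n * p) by linarith, neg_sq] at key
    refine le_of_eq_of_le ?_ key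
    field_simp
  · filter_upwards [hab] with n ⟨ha, hb, hn⟩
    have hn0 : (0 : ℝ) < n := by linarith
    exact mul_log_div_add_mul_log_div_nonpos ha hb (mul_pos hn0 hp0)
      (mul_pos hn0 (by linarith)) (by linarith)

theorem tendsto_choose_mul_pow_mul_sqrt {p : ℝ} (hp0 : 0 < p) (hp1 : p < 1) {K : ℕ → ℕ}
    (hK : Tendsto (fun n : ℕ ↦ |(K n : ℝ) - n * p| / √n) atTop (𝓝 0)) :
    Tendsto (fun n : ℕ ↦ (n.choose (K n) : ℝ) * p ^ K n * (1 - p) ^ (n - K n) *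
      √(2 * π * n * p * (1 - p))) atTop (𝓝 1) := by
  set M : ℕ → ℕ := fun n ↦ n - K n
  have hq : 0 < 1 - p := by linarith
  have hKdiv := tendsto_div_self_of_tendsto_abs_sub_div_sqrt hK
  have hKpos := eventually_pos_and_lt_of_tendsto_div_self hKdiv hp0 hp1
  have hMdiv : Tendsto (fun n : ℕ ↦ (M n : ℝ) / n) atTop (𝓝 (1 - p)) := by
    refine ((tendsto_const_nhds (x := 1)).sub hKdiv).congr' ?_
    filter_upwards [hKpos] with n hn
    have hn0 : (0 : ℝ) < n := hn.1.trans hn.2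
    rw [Nat.cast_sub (by exact_mod_cast hn.2.le)]
    field_simp
  have hMpos := eventually_pos_and_lt_of_tendsto_div_self hMdiv (by linarith) (by linarith)
  have hKinf := tendsto_natCast_atTop_iff.1 (tendsto_atTop_of_tendsto_div_self hKdiv hp0)
  have hMinf := tendsto_natCast_atTop_iff.1 (tendsto_atTop_of_tendsto_div_self hMdiv (by linarith))
  have hstirling := tendsto_sqrt_pi_mul_stirlingSeq_div tendsto_id hKinf hMinf
  have hpow : Tendsto (fun n : ℕ ↦ (n * p / K n) ^ K n * (n * (1 - p) / M n) ^ M n)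
      atTop (𝓝 1) := by
    have hexp := tendsto_mul_log_add_mul_log hp0 hp1 (a := fun n ↦ K n) (b := fun n ↦ M n) ?_
      (tendsto_sq_sub_div_of_tendsto_abs_sub_div_sqrt hK)
    · refine (tendsto_exp_nhds_zero_nhds_one.comp hexp).congr' ?_
      filter_upwards [hKpos, hMpos] with n hK hM
      have hn0 : (0 : ℝ) < n := hK.1.trans hK.2
      rw [Function.comp_apply, exp_add, exp_nat_mul, exp_nat_mul,
        exp_log (div_pos (mul_pos hn0 hp0) hK.1), exp_log (div_pos (mul_pos hn0 hq) hM.1)]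
    · filter_upwards [hKpos, hMpos] with n hK hM
      refine ⟨hK.1, hM.1, ?_⟩
      rw [← Nat.cast_add, Nat.add_sub_of_le (by exact_mod_cast hK.2.le)]
  have h := (hstirling.mul (tendsto_sqrt_sq_mul_div_mul hKdiv hMdiv (by positivity))).mul
    hpow
  rw [mul_one, mul_one] at h
  refine h.congr' ?_
  filter_upwards [hKpos, hMpos] with n hK hM
  rw [choose_mul_pow_mul_pow_mul_sqrt_eq (Nat.add_sub_of_le (by exact_mod_cast hK.2.le))
    (by exact_mod_cast hK.1.ne') (by exact_mod_cast hM.1.ne') hp0.le (by linarith)]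
  rfl

theorem stmt_5 (p : ℝ) (hp0 : 0 < p) (hp1 : p < 1) (k : ℕ → ℤ)
    (hk : Tendsto (fun n : ℕ => |(k n : ℝ) - n * p| / Real.sqrt n) atTop (nhds 0)) :
    Tendsto
      (fun n : ℕ =>
        binomProb n p (k n) * Real.sqrt (2 * Real.pi * n * p * (1 - p)))
      atTop (nhds 1) := by
  have hbounds := eventually_pos_and_lt_of_tendsto_div_self
    (tendsto_div_self_of_tendsto_abs_sub_div_sqrt hk) hp0 hp1
  have hcast : ∀ᶠ n : ℕ in atTop, ((k n).toNat : ℝ) = k n := by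
    filter_upwards [hbounds] with n hn
    exact_mod_cast Int.toNat_of_nonneg (by exact_mod_cast hn.1.le)
  have hK : Tendsto (fun n : ℕ ↦ |((k n).toNat : ℝ) - n * p| / √n) atTop (𝓝 0) := by
    refine hk.congr' ?_
    filter_upwards [hcast] with n hn
    rw [hn]
  refine (tendsto_choose_mul_pow_mul_sqrt hp0 hp1 hK).congr' ?_
  filter_upwards [hbounds] with n hn
  rw [binomProb, if_pos ⟨by exact_mod_cast hn.1.le, by exact_mod_cast hn.2.le⟩]
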